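/- arXiv:2403.10599 — 4 statements merged into one kernel-verified Lean document; each statement's English description precedes it below -/
import Mathlib

section
/- For a regular bipartite graph with left-degree ΔB that is (γ,δ) left-expanding with δ < 1/2, every subset B' of left vertices with |B'| ≤ γn has at least ΔB(1-2δ)|B'| unique neighbors (right vertices adjacent to exactly one vertex of B'). -/
/-!
Count the edges between `B'` and its boundary `∂B'` in two ways. By left-regularity there are
exactly `ΔB |B'|` of them; on the other hand a unique neighbour carries one edge and every other
vertex of `∂B'` at least two, so `2 |∂B'| ≤ ΔB |B'| + #unique neighbours`. Expansion
`|∂B'| ≥ (1 - δ) ΔB |B'|` then leaves at least `(1 - 2δ) ΔB |B'|` unique neighbours.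
-/

open Finset

namespace Finset

variable {α β : Type*} [Fintype α] (r : α → β → Prop) [∀ a b, Decidable (r a b)] (t : Finset β)

def bipartiteBoundary : Finset α := {a | ∃ b ∈ t, r a b}

def bipartiteUniqueNeighbors : Finset α := {a | #(t.bipartiteAbove r a) = 1}

theorem two_mul_card_bipartiteBoundary_le :
    2 * #(t.bipartiteBoundary r) ≤
      ∑ a, #(t.bipartiteAbove r a) + #(t.bipartiteUniqueNeighbors r) := by
  rw [bipartiteBoundary, bipartiteUniqueNeighbors, card_filter, card_filter, mul_sum,
    ← sum_add_distrib]
  refine sum_le_sum fun a _ => ?_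
  have hpos : (∃ b ∈ t, r a b) ↔ 0 < #(t.bipartiteAbove r a) := by
    simp [card_pos, Finset.Nonempty, bipartiteAbove]
  simp only [hpos]
  split_ifs <;> omega

theorem sum_card_bipartiteAbove_eq_of_regular {d : ℕ}
    (hreg : ∀ b, #((univ : Finset α).bipartiteBelow r b) = d) :
    ∑ a, #(t.bipartiteAbove r a) = d * #t := by
  rw [sum_card_bipartiteAbove_eq_sum_card_bipartiteBelow, sum_congr rfl fun b _ => hreg b,
    sum_const, smul_eq_mul, mul_comm]

end Finset

theorem unique_neighbor_expansion_general (m n ΔB : ℕ) (γ δ : ℝ)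
    (A : Fin m → Fin n → Bool)
    (hreg : ∀ i : Fin n, (Finset.univ.filter (fun c : Fin m => A c i)).card = ΔB)
    (hexp : ∀ B' : Finset (Fin n), (B'.card : ℝ) ≤ γ * n →
      (((Finset.univ.filter (fun c : Fin m => ∃ i ∈ B', A c i)).card : ℝ))
        ≥ (1 - δ) * ΔB * B'.card)
    (B' : Finset (Fin n)) (hB' : (B'.card : ℝ) ≤ γ * n) :
    (((Finset.univ.filter
        (fun c : Fin m => (B'.filter (fun i => A c i)).card = 1)).card : ℝ))
      ≥ ΔB * (1 - 2 * δ) * B'.card := by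
  have hcount : 2 * #{c | ∃ i ∈ B', A c i} ≤ ΔB * #B' + #{c | #{i ∈ B' | A c i} = 1} := by
    rw [← sum_card_bipartiteAbove_eq_of_regular (fun c i => A c i = true) B' hreg]
    convert two_mul_card_bipartiteBoundary_le (fun c i => A c i = true) B' using 3
    -- the two sides decide `∃ i ∈ B', _` by different (equal) instances
    · unfold bipartiteBoundary; congr!
    · rfl
  have hboundary := hexp B' hB'
  have hcountℝ : 2 * (#{c | ∃ i ∈ B', A c i} : ℝ) ≤ ΔB * #B' + #{c | #{i ∈ B' | A c i} = 1} := by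
    exact_mod_cast hcount
  linarith

/-- Unique-neighbor expansion: in a `ΔB`-left-regular bipartite graph (left vertices
`Fin n`, right vertices `Fin m`, adjacency `A`) that is `(γ,δ)` left-expanding with
`δ < 1/2`, every subset `B'` of left vertices with `|B'| ≤ γn` has at least
`ΔB(1-2δ)|B'|` unique neighbors. -/
theorem unique_neighbor_expansion (m n ΔB : ℕ) (γ δ : ℝ) (hδ : δ < 1/2)
    (A : Fin m → Fin n → Bool)
    (hreg : ∀ i : Fin n, (Finset.univ.filter (fun c : Fin m => A c i)).card = ΔB)
    (hexp : ∀ B' : Finset (Fin n), (B'.card : ℝ) ≤ γ * n →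
      (((Finset.univ.filter (fun c : Fin m => ∃ i ∈ B', A c i)).card : ℝ))
        ≥ (1 - δ) * ΔB * B'.card)
    (B' : Finset (Fin n)) (hB' : (B'.card : ℝ) ≤ γ * n) :
    (((Finset.univ.filter
        (fun c : Fin m => (B'.filter (fun i => A c i)).card = 1)).card : ℝ))
      ≥ ΔB * (1 - 2 * δ) * B'.card :=
  unique_neighbor_expansion_general m n ΔB γ δ A hreg hexp B' hB'
end

section
/- Let H be an m×n matrix over F₂ that is the bipartite adjacency matrix of a ΔB-left-regular bipartite graph which is (γ,δ) left-expanding with δ < 1/2. Then every vector e ∈ F₂ⁿ with Hamming weight 0 < |e| ≤ γn satisfies |He| ≥ ΔB(1-2δ)|e|. -/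
/-!
Let `S` be the support of `e` and, for a check `c`, let `d c` be the number of bits of `S` in `c`.
Then `(H e)_c = d c mod 2`, so `|H e|` counts the checks with `d c` odd, and left-regularity gives
`∑ d c = ΔB |S|`. Every neighbour of `S` has `d c ≥ 2` unless `d c` is odd, hence
`2 |N(S)| ≤ ΔB |S| + |H e|`, and expansion `|N(S)| ≥ (1 - δ) ΔB |S|` gives the bound.
-/

/-- Hamming weight of an `F₂` vector. -/
def hammingWt {k : ℕ} (x : Fin k → ZMod 2) : ℕ :=
  (Finset.univ.filter (fun i => x i ≠ 0)).card

open Finset Matrix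

theorem Finset.two_mul_card_filter_pos_le_sum_add_card_filter_odd {α : Type*} (s : Finset α)
    (f : α → ℕ) : 2 * #{a ∈ s | 0 < f a} ≤ ∑ a ∈ s, f a + #{a ∈ s | Odd (f a)} := by
  simp only [card_filter, mul_sum, ← sum_add_distrib]
  refine sum_le_sum fun a _ => ?_
  rcases f a with _ | _ | k <;> simp only [Nat.odd_iff] <;> split_ifs <;> omega

theorem Matrix.mulVec_apply_zmod_two {κ ι : Type*} [Fintype ι] (H : Matrix κ ι (ZMod 2))
    (e : ι → ZMod 2) (c : κ) :
    (H *ᵥ e) c = #((univ.filter (e · ≠ 0)).bipartiteAbove (fun c i => H c i = 1) c) := by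
  simp only [mulVec, dotProduct, bipartiteAbove, filter_filter, natCast_card_filter]
  refine sum_congr rfl fun i _ => ?_
  generalize H c i = a, e i = b
  fin_cases a <;> fin_cases b <;> decide

theorem two_mul_card_neighbors_le {κ ι : Type*} [Fintype κ] (r : κ → ι → Prop)
    [∀ c i, Decidable (r c i)] {S : Finset ι} {Δ : ℕ} (hreg : ∀ i ∈ S, #{c | r c i} = Δ) :
    2 * #{c | ∃ i ∈ S, r c i} ≤ Δ * #S + #{c | Odd #(S.bipartiteAbove r c)} := by
  have hedges : ∑ c, #(S.bipartiteAbove r c) = Δ * #S := by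
    rw [sum_card_bipartiteAbove_eq_sum_card_bipartiteBelow]
    simp only [bipartiteBelow]
    rw [sum_congr rfl hreg, sum_const, smul_eq_mul, mul_comm]
  have hnbr : #{c | ∃ i ∈ S, r c i} = #{c | 0 < #(S.bipartiteAbove r c)} := by
    simp [card_pos, Finset.Nonempty]
  rw [hnbr, ← hedges]
  exact two_mul_card_filter_pos_le_sum_add_card_filter_odd _ _

theorem hammingWt_mulVec {m n : ℕ} (H : Matrix (Fin m) (Fin n) (ZMod 2)) (e : Fin n → ZMod 2) :
    hammingWt (H *ᵥ e) =
      #{c | Odd #((univ.filter (e · ≠ 0)).bipartiteAbove (fun c i => H c i = 1) c)} := by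
  simp only [hammingWt, mulVec_apply_zmod_two, ZMod.natCast_ne_zero_iff_odd]

-- Stated with the classical instances of `linear_confinement`: without them
-- `∃ i ∈ S, H c i = 1` is not found decidable for a `Matrix`.
open Classical in
theorem two_mul_card_neighbors_le_hammingWt {m n Δ : ℕ} (H : Matrix (Fin m) (Fin n) (ZMod 2))
    (hreg : ∀ i, #{c | H c i = 1} = Δ) (e : Fin n → ZMod 2) :
    2 * #{c | ∃ i ∈ univ.filter (e · ≠ 0), H c i = 1} ≤ Δ * hammingWt e + hammingWt (H *ᵥ e) := by
  rw [hammingWt_mulVec, hammingWt]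
  convert two_mul_card_neighbors_le (fun c i => H c i = 1) fun i _ => (by convert hreg i)

open Classical in
theorem linear_confinement_general (m n ΔB : ℕ) (γ δ : ℝ)
    (H : Matrix (Fin m) (Fin n) (ZMod 2))
    (hreg : ∀ i : Fin n, (Finset.univ.filter (fun c : Fin m => H c i = 1)).card = ΔB)
    (hexp : ∀ B' : Finset (Fin n), (B'.card : ℝ) ≤ γ * n →
      (((Finset.univ.filter (fun c : Fin m => ∃ i ∈ B', H c i = 1)).card : ℝ))
        ≥ (1 - δ) * ΔB * B'.card)
    (e : Fin n → ZMod 2) (he : (hammingWt e : ℝ) ≤ γ * n) :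
    ((hammingWt (H.mulVec e) : ℝ)) ≥ ΔB * (1 - 2 * δ) * hammingWt e := by
  have hcount : 2 * (#{c | ∃ i ∈ univ.filter (e · ≠ 0), H c i = 1} : ℝ) ≤
      ΔB * hammingWt e + hammingWt (H *ᵥ e) := mod_cast
    two_mul_card_neighbors_le_hammingWt H hreg e
  have hexpS : #{c | ∃ i ∈ univ.filter (e · ≠ 0), H c i = 1} ≥ (1 - δ) * ΔB * hammingWt e :=
    hexp _ he
  linarith

open Classical in
/-- Linear confinement: if `H` is the bipartite adjacency matrix of a `ΔB`-left-regular
`(γ,δ)` left-expanding Tanner graph with `δ < 1/2`, then every `e` with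
`0 < |e| ≤ γn` satisfies `|He| ≥ ΔB(1-2δ)|e|`. -/
theorem linear_confinement (m n ΔB : ℕ) (γ δ : ℝ) (hδ : δ < 1/2)
    (H : Matrix (Fin m) (Fin n) (ZMod 2))
    (hreg : ∀ i : Fin n, (Finset.univ.filter (fun c : Fin m => H c i = 1)).card = ΔB)
    (hexp : ∀ B' : Finset (Fin n), (B'.card : ℝ) ≤ γ * n →
      (((Finset.univ.filter (fun c : Fin m => ∃ i ∈ B', H c i = 1)).card : ℝ))
        ≥ (1 - δ) * ΔB * B'.card)
    (e : Fin n → ZMod 2) (he0 : 0 < hammingWt e) (he : (hammingWt e : ℝ) ≤ γ * n) :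
    ((hammingWt (H.mulVec e) : ℝ)) ≥ ΔB * (1 - 2 * δ) * hammingWt e :=
  linear_confinement_general m n ΔB γ δ H hreg hexp e he
end

section
/- Let π be the Gibbs distribution π(x) ∝ exp(-β(2|Hx| - m)) on F₂ⁿ, where H is ΔB-left-regular with (γ,δ) left-expanding Tanner graph, δ < 1/2, and set η = ΔB(1-2δ). Let E = {x ∈ F₂ⁿ : |x| = ⌊γn/2⌋}. Then π(E)/π(0) ≤ C(n, ⌊γn/2⌋) · e^{-βηγn}, and consequently π(E)/π(0) ≤ exp(½γn(1 + log(2/γ) - 2βη)) for large n. -/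
/-!
Every `x` of weight `w = γn/2` lies in the expansion regime, and a unique-neighbour count turns
expansion into confinement: the support `S` of `x` sends `ΔB·|S|` edges into at least
`(1-δ)ΔB·|S|` checks, so at least `(1-2δ)ΔB·|S|` checks see exactly one position of `S`, and each
of them is violated by `x`. Hence each term of `π(E)/π(0)` is at most `e^{-2βηw} = e^{-βηγn}`;
there are at most `C(n, w)` terms, and `C(n, w) ≤ (en/w)^w` with `n/w = 2/γ` gives the
exponential form.
-/

open Finset Real

namespace Nat

theorem choose_le_exp_mul_one_add_log (n k : ℕ) :
    (n.choose k : ℝ) ≤ Real.exp (k * (1 + Real.log (n / k))) := by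
  rcases Nat.eq_zero_or_pos k with rfl | hk
  · simp
  rcases Nat.eq_zero_or_pos n with rfl | hn
  · rw [Nat.choose_eq_zero_of_lt hk, Nat.cast_zero]
    exact (exp_pos _).le
  have hk' : (0 : ℝ) < k := by exact_mod_cast hk
  calc (n.choose k : ℝ) ≤ (n : ℝ) ^ k / k ! := choose_le_pow_div k n
    _ = ((n : ℝ) / k) ^ k * ((k : ℝ) ^ k / k !) := by
        rw [div_pow, ← mul_div_assoc, div_mul_cancel₀ _ (by positivity)]
    _ ≤ Real.exp (k * Real.log (n / k)) * Real.exp k := by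
        rw [exp_nat_mul, exp_log (by positivity)]
        gcongr
        exact pow_div_factorial_le_exp _ hk'.le k
    _ = Real.exp (k * (1 + Real.log (n / k))) := by
        rw [← exp_add]; ring_nf

end Nat

lemma eq_of_filter_ne_zero_eq {n : ℕ} {x y : Fin n → ZMod 2}
    (h : univ.filter (x · ≠ 0) = univ.filter (y · ≠ 0)) : x = y := by
  funext i
  have hi : x i ≠ 0 ↔ y i ≠ 0 := by simpa using congrArg (i ∈ ·) h
  by_cases hx : x i = 0
  · have hy : y i = 0 := by simpa [hx] using hi
    rw [hx, hy]
  · rw [Fin.eq_one_of_ne_zero _ hx, Fin.eq_one_of_ne_zero _ (hi.1 hx)]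

theorem card_filter_hammingWt_eq_le_choose (n w : ℕ) :
    #{x : Fin n → ZMod 2 | hammingWt x = w} ≤ n.choose w := by
  simpa using card_le_card_of_injOn (t := powersetCard w univ)
    (fun x : Fin n → ZMod 2 => univ.filter (x · ≠ 0))
    (fun x hx => by simpa [mem_powersetCard_univ, hammingWt] using hx)
    (fun _ _ _ _ hxy => eq_of_filter_ne_zero_eq hxy)

theorem Finset.two_mul_card_filter_pos_le {ι : Type*} [Fintype ι] (d : ι → ℕ) :
    2 * #{c | 0 < d c} ≤ ∑ c, d c + #{c | d c = 1} := by
  simp only [card_filter, mul_sum, ← sum_add_distrib]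
  exact sum_le_sum fun c _ => by split_ifs <;> omega

namespace Matrix

-- Instance search cannot decide `H c i = 1` under a binder (it does not see `Matrix` as a
-- function type), so filters over checks need classical decidability, as in the statement.
open scoped Classical

variable {m n : ℕ} (H : Matrix (Fin m) (Fin n) (ZMod 2))

noncomputable def checkNeighbors (S : Finset (Fin n)) : Finset (Fin m) :=
  univ.filter (fun c => ∃ i ∈ S, H c i = 1)

def uniqueCheckNeighbors (S : Finset (Fin n)) : Finset (Fin m) :=
  univ.filter (fun c => #{i ∈ S | H c i = 1} = 1)

theorem sum_card_filter_eq_card_mul {ΔB : ℕ} (hreg : ∀ i, #{c | H c i = 1} = ΔB)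
    (S : Finset (Fin n)) : ∑ c, #{i ∈ S | H c i = 1} = #S * ΔB := by
  rw [← smul_eq_mul, ← sum_const, ← sum_congr rfl fun i _ => hreg i]
  convert sum_card_bipartiteAbove_eq_sum_card_bipartiteBelow (fun c i => H c i = 1) <;>
    simp [bipartiteAbove, bipartiteBelow]

theorem two_mul_card_checkNeighbors_le (S : Finset (Fin n)) :
    2 * #(H.checkNeighbors S) ≤ ∑ c, #{i ∈ S | H c i = 1} + #(H.uniqueCheckNeighbors S) := by
  have hN : H.checkNeighbors S = ({c | 0 < #{i ∈ S | H c i = 1}} : Finset (Fin m)) := by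
    ext c
    simp [checkNeighbors, card_pos, filter_nonempty_iff]
  rw [hN]
  exact two_mul_card_filter_pos_le _

theorem mulVec_apply_eq_card (x : Fin n → ZMod 2) (c : Fin m) :
    (H *ᵥ x) c = (#{i ∈ univ.filter (x · ≠ 0) | H c i = 1} : ZMod 2) := by
  rw [card_eq_sum_ones, Nat.cast_sum, sum_filter, sum_filter, mulVec, dotProduct]
  refine sum_congr rfl fun i _ => ?_
  generalize H c i = a, x i = b
  revert a b
  decide

theorem uniqueCheckNeighbors_subset (x : Fin n → ZMod 2) :
    H.uniqueCheckNeighbors (univ.filter (x · ≠ 0)) ⊆ univ.filter ((H *ᵥ x) · ≠ 0) := by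
  intro c hc
  simp only [uniqueCheckNeighbors, mem_filter, mem_univ, true_and] at hc ⊢
  rw [mulVec_apply_eq_card, hc]
  exact one_ne_zero

theorem mul_hammingWt_le_hammingWt_mulVec {ΔB : ℕ} {δ : ℝ}
    (hreg : ∀ i, #{c | H c i = 1} = ΔB) (x : Fin n → ZMod 2)
    (hexpand : (1 - δ) * ΔB * hammingWt x ≤ #(H.checkNeighbors (univ.filter (x · ≠ 0)))) :
    (1 - 2 * δ) * ΔB * hammingWt x ≤ hammingWt (H *ᵥ x) := by
  set S := univ.filter (x · ≠ 0)
  have hedges : 2 * #(H.checkNeighbors S) ≤ hammingWt x * ΔB + #(H.uniqueCheckNeighbors S) :=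
    H.sum_card_filter_eq_card_mul hreg S ▸ H.two_mul_card_checkNeighbors_le S
  have hunique : #(H.uniqueCheckNeighbors S) ≤ hammingWt (H *ᵥ x) :=
    card_le_card (H.uniqueCheckNeighbors_subset x)
  have hcount : (2 : ℝ) * #(H.checkNeighbors S) ≤ hammingWt x * ΔB + hammingWt (H *ᵥ x) := by
    exact_mod_cast hedges.trans (by omega)
  linarith

theorem exp_energy_div_exp_energy_zero_le {ΔB : ℕ} {δ β : ℝ} (hβ : 0 ≤ β)
    (hreg : ∀ i, #{c | H c i = 1} = ΔB) (x : Fin n → ZMod 2)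
    (hexpand : (1 - δ) * ΔB * hammingWt x ≤ #(H.checkNeighbors (univ.filter (x · ≠ 0)))) :
    Real.exp (-β * (2 * (hammingWt (H *ᵥ x) : ℝ) - m)) /
        Real.exp (-β * (2 * (hammingWt (H *ᵥ (0 : Fin n → ZMod 2)) : ℝ) - m))
      ≤ Real.exp (-2 * β * ((1 - 2 * δ) * ΔB * hammingWt x)) := by
  have hwt_zero : hammingWt (0 : Fin m → ZMod 2) = 0 := by simp [hammingWt]
  rw [← exp_sub, mulVec_zero, hwt_zero, exp_le_exp]
  push_cast
  linear_combination 2 * mul_le_mul_of_nonneg_left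
    (H.mul_hammingWt_le_hammingWt_mulVec hreg x hexpand) hβ

end Matrix

lemma mul_log_div_eq_of_eq_mul_div_two {w n γ : ℝ} (hw : w = γ * n / 2) :
    w * log (n / w) = w * log (2 / γ) := by
  rcases eq_or_ne w 0 with rfl | hw0
  · simp
  have hγ : γ ≠ 0 := by rintro rfl; simp [hw0] at hw
  rw [show n / w = 2 / γ by field_simp; linarith]

open Classical in
theorem gibbs_bottleneck_estimate_general (m n ΔB : ℕ) (γ δ β : ℝ) (hβ : 0 ≤ β)
    (H : Matrix (Fin m) (Fin n) (ZMod 2))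
    (hreg : ∀ i : Fin n, (Finset.univ.filter (fun c : Fin m => H c i = 1)).card = ΔB)
    (hexp : ∀ B' : Finset (Fin n), (B'.card : ℝ) ≤ γ * n →
      (((Finset.univ.filter (fun c : Fin m => ∃ i ∈ B', H c i = 1)).card : ℝ))
        ≥ (1 - δ) * ΔB * B'.card)
    (w : ℕ) (hw : (w : ℝ) = γ * n / 2) :
    (∑ x ∈ Finset.univ.filter (fun x : Fin n → ZMod 2 => hammingWt x = w),
        Real.exp (-β * (2 * (hammingWt (H.mulVec x) : ℝ) - m)))
      / Real.exp (-β * (2 * (hammingWt (H.mulVec (0 : Fin n → ZMod 2)) : ℝ) - m))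
      ≤ (n.choose w : ℝ) * Real.exp (-β * (ΔB * (1 - 2 * δ)) * γ * n)
    ∧
    (∑ x ∈ Finset.univ.filter (fun x : Fin n → ZMod 2 => hammingWt x = w),
        Real.exp (-β * (2 * (hammingWt (H.mulVec x) : ℝ) - m)))
      / Real.exp (-β * (2 * (hammingWt (H.mulVec (0 : Fin n → ZMod 2)) : ℝ) - m))
      ≤ Real.exp ((γ * n / 2) *
          (1 + Real.log (2 / γ) - 2 * β * (ΔB * (1 - 2 * δ)))) := by
  have hterm : ∀ x ∈ univ.filter (fun x : Fin n → ZMod 2 => hammingWt x = w),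
      Real.exp (-β * (2 * (hammingWt (H.mulVec x) : ℝ) - m)) /
          Real.exp (-β * (2 * (hammingWt (H.mulVec (0 : Fin n → ZMod 2)) : ℝ) - m))
        ≤ Real.exp (-β * (ΔB * (1 - 2 * δ)) * γ * n) := by
    intro x hx
    have hxw : (hammingWt x : ℝ) = w := by exact_mod_cast (mem_filter.1 hx).2
    convert H.exp_energy_div_exp_energy_zero_le hβ hreg x
      (hexp (univ.filter (x · ≠ 0)) (by change (hammingWt x : ℝ) ≤ γ * n; linarith)) using 2
    rw [hxw, hw]
    ring
  have hfirst := calc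
    _ = ∑ x ∈ univ.filter (fun x : Fin n → ZMod 2 => hammingWt x = w),
          Real.exp (-β * (2 * (hammingWt (H.mulVec x) : ℝ) - m)) /
            Real.exp (-β * (2 * (hammingWt (H.mulVec (0 : Fin n → ZMod 2)) : ℝ) - m)) := sum_div ..
    _ ≤ _ := sum_le_card_nsmul _ _ _ hterm
    _ ≤ (n.choose w : ℝ) * Real.exp (-β * (ΔB * (1 - 2 * δ)) * γ * n) := by
      rw [nsmul_eq_mul]
      gcongr
      exact_mod_cast card_filter_hammingWt_eq_le_choose n w
  refine ⟨hfirst, hfirst.trans ?_⟩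
  calc _ ≤ Real.exp (w * (1 + Real.log (n / w))) * Real.exp (-β * (ΔB * (1 - 2 * δ)) * γ * n) := by
        gcongr
        exact Nat.choose_le_exp_mul_one_add_log n w
    _ = _ := by
        rw [← exp_add, mul_add, mul_log_div_eq_of_eq_mul_div_two hw, hw]
        ring_nf

open Classical in
/-- Bottleneck estimate: for the Gibbs distribution `π(x) ∝ exp(-β(2|Hx| - m))` of a
`ΔB`-left-regular code with `(γ,δ)` left-expanding Tanner graph (`δ < 1/2`,
`η = ΔB(1-2δ)`), the bottleneck set `E = {x : |x| = γn/2}` satisfies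
`π(E)/π(0) ≤ C(n, γn/2)·e^{-βηγn} ≤ exp(½γn(1 + log(2/γ) - 2βη))`. -/
theorem gibbs_bottleneck_estimate (m n ΔB : ℕ) (γ δ β : ℝ) (hδ : δ < 1/2)
    (hγ0 : 0 < γ) (hγ1 : γ ≤ 1) (hβ : 0 ≤ β)
    (H : Matrix (Fin m) (Fin n) (ZMod 2))
    (hreg : ∀ i : Fin n, (Finset.univ.filter (fun c : Fin m => H c i = 1)).card = ΔB)
    (hexp : ∀ B' : Finset (Fin n), (B'.card : ℝ) ≤ γ * n →
      (((Finset.univ.filter (fun c : Fin m => ∃ i ∈ B', H c i = 1)).card : ℝ))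
        ≥ (1 - δ) * ΔB * B'.card)
    (w : ℕ) (hw1 : 1 ≤ w) (hw : (w : ℝ) = γ * n / 2) :
    (∑ x ∈ Finset.univ.filter (fun x : Fin n → ZMod 2 => hammingWt x = w),
        Real.exp (-β * (2 * (hammingWt (H.mulVec x) : ℝ) - m)))
      / Real.exp (-β * (2 * (hammingWt (H.mulVec (0 : Fin n → ZMod 2)) : ℝ) - m))
      ≤ (n.choose w : ℝ) * Real.exp (-β * (ΔB * (1 - 2 * δ)) * γ * n)
    ∧
    (∑ x ∈ Finset.univ.filter (fun x : Fin n → ZMod 2 => hammingWt x = w),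
        Real.exp (-β * (2 * (hammingWt (H.mulVec x) : ℝ) - m)))
      / Real.exp (-β * (2 * (hammingWt (H.mulVec (0 : Fin n → ZMod 2)) : ℝ) - m))
      ≤ Real.exp ((γ * n / 2) *
          (1 + Real.log (2 / γ) - 2 * β * (ΔB * (1 - 2 * δ)))) :=
  gibbs_bottleneck_estimate_general m n ΔB γ δ β hβ H hreg hexp w hw
end

section
/- Let H₁ ∈ F₂^{m₁×n₁} and H₂ ∈ F₂^{m₂×n₂}. Define H_X = (H₁ ⊗ I_{n₂} | I_{m₁} ⊗ H₂ᵀ) and H_Z = (I_{n₁} ⊗ H₂ | H₁ᵀ ⊗ I_{m₂}), block matrices over F₂ acting on F₂^{n₁n₂ + m₁m₂}. Then H_X H_Zᵀ = 0. -/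
open scoped Kronecker
open Matrix

/-!
Both blocks of `H_X H_Zᵀ` are `H₁ ⊗ H₂ᵀ`, by the mixed-product rule
`(A ⊗ B)(C ⊗ D) = AC ⊗ BD`; their sum vanishes in characteristic two.
-/

namespace Matrix

variable {R : Type*} [CommSemiring R] {m₁ n₁ m₂ n₂ : Type*}

theorem kronecker_one_mul_one_kronecker [Fintype n₁] [Fintype n₂]
    [DecidableEq n₁] [DecidableEq n₂] (A : Matrix m₁ n₁ R) (B : Matrix n₂ m₂ R) :
    (A ⊗ₖ (1 : Matrix n₂ n₂ R)) * ((1 : Matrix n₁ n₁ R) ⊗ₖ B) = A ⊗ₖ B := by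
  rw [← mul_kronecker_mul, Matrix.mul_one, Matrix.one_mul]

theorem one_kronecker_mul_kronecker_one [Fintype m₁] [Fintype m₂]
    [DecidableEq m₁] [DecidableEq m₂] (A : Matrix m₁ n₁ R) (B : Matrix n₂ m₂ R) :
    ((1 : Matrix m₁ m₁ R) ⊗ₖ B) * (A ⊗ₖ (1 : Matrix m₂ m₂ R)) = A ⊗ₖ B := by
  rw [← mul_kronecker_mul, Matrix.mul_one, Matrix.one_mul]

theorem hypergraphProduct_mul_transpose [Fintype n₁] [Fintype m₁] [Fintype n₂] [Fintype m₂]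
    [DecidableEq n₁] [DecidableEq m₁] [DecidableEq n₂] [DecidableEq m₂]
    (H₁ : Matrix m₁ n₁ R) (H₂ : Matrix m₂ n₂ R) :
    fromCols (H₁ ⊗ₖ (1 : Matrix n₂ n₂ R)) ((1 : Matrix m₁ m₁ R) ⊗ₖ H₂ᵀ)
      * (fromCols ((1 : Matrix n₁ n₁ R) ⊗ₖ H₂) (H₁ᵀ ⊗ₖ (1 : Matrix m₂ m₂ R)))ᵀ
      = H₁ ⊗ₖ H₂ᵀ + H₁ ⊗ₖ H₂ᵀ := by
  rw [transpose_fromCols, fromCols_mul_fromRows, ← kroneckerMap_transpose,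
    ← kroneckerMap_transpose, transpose_one, transpose_one, transpose_transpose,
    kronecker_one_mul_one_kronecker, one_kronecker_mul_kronecker_one]

end Matrix

/-- CSS orthogonality of the hypergraph product: with
`H_X = (H₁ ⊗ I_{n₂} | I_{m₁} ⊗ H₂ᵀ)` and `H_Z = (I_{n₁} ⊗ H₂ | H₁ᵀ ⊗ I_{m₂})`
over `F₂`, one has `H_X H_Zᵀ = 0`. -/
theorem hypergraph_product_css_orthogonality (m₁ n₁ m₂ n₂ : ℕ)
    (H₁ : Matrix (Fin m₁) (Fin n₁) (ZMod 2)) (H₂ : Matrix (Fin m₂) (Fin n₂) (ZMod 2)) :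
    (Matrix.fromCols (H₁ ⊗ₖ (1 : Matrix (Fin n₂) (Fin n₂) (ZMod 2)))
        ((1 : Matrix (Fin m₁) (Fin m₁) (ZMod 2)) ⊗ₖ H₂ᵀ))
      * (Matrix.fromCols ((1 : Matrix (Fin n₁) (Fin n₁) (ZMod 2)) ⊗ₖ H₂)
        (H₁ᵀ ⊗ₖ (1 : Matrix (Fin m₂) (Fin m₂) (ZMod 2))))ᵀ = 0 := by
  rw [hypergraphProduct_mul_transpose]
  ext i j
  exact CharTwo.add_self_eq_zero _
end
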